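/- arXiv:1406.6205 — 5 statements merged into one kernel-verified Lean document; each statement's English description precedes it below -/
import Mathlib

section
/- Let H be an infinite-dimensional separable complex Hilbert space and let (f_k)_{k∈ℕ} be a frame for H with synthesis operator T : ℓ²(ℕ) → H, T((c_k)_k) = Σ_k c_k f_k. Then for every ε ∈ (0,1) there exist three orthonormal bases (e_k¹)_{k∈ℕ}, (e_k²)_{k∈ℕ}, (e_k³)_{k∈ℕ} of H such that f_k = (‖T‖/(1−ε))·(e_k¹ + e_k² + e_k³) for every k ∈ ℕ. -/
/-!
Pick a Hilbert basis `β` of `H` indexed by `ℕ`. The operator `S = T ∘ β.repr` sends `β k` to `f k`,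
and `r⁻¹ • S` with `r = ‖T‖ / (1 - ε)` is a strict contraction. In a unital C⋆-algebra every
strict contraction `a` is a sum of three unitaries: `b = (1 + a) / 2` is an invertible contraction,
its polar decomposition `b = w |b|` has `w` unitary, and `|b|` is the real part of the unitary
`|b| + I √(1 - |b|²)`, so `1 + a` is a sum of two unitaries and `a` is that sum plus `-1`.
Unitaries map `β` to Hilbert bases.
-/

open scoped InnerProductSpace

section CStarAlgebra

variable {A : Type*} [CStarAlgebra A] [PartialOrder A] [StarOrderedRing A]

lemma IsUnit.cfcAbs {b : A} (hb : IsUnit b) : IsUnit (CFC.abs b) := by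
  rw [← isUnit_pow_iff two_ne_zero, CFC.abs_sq]
  exact hb.star.mul hb

lemma IsUnit.mul_inverse_cfcAbs_mem_unitary {b : A} (hb : IsUnit b) :
    b * Ring.inverse (CFC.abs b) ∈ unitary A := by
  have habs := hb.cfcAbs
  refine (hb.mul habs.ringInverse).mem_unitary_of_star_mul_self ?_
  rw [star_mul, (CFC.abs_nonneg b).isSelfAdjoint.ringInverse.star_eq]
  calc Ring.inverse (CFC.abs b) * star b * (b * Ring.inverse (CFC.abs b))
      = Ring.inverse (CFC.abs b) * (CFC.abs b * CFC.abs b) * Ring.inverse (CFC.abs b) := by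
        rw [CFC.abs_mul_abs]; noncomm_ring
    _ = 1 := by
        rw [← mul_assoc, Ring.inverse_mul_cancel _ habs, one_mul,
          Ring.mul_inverse_cancel _ habs]

lemma IsSelfAdjoint.exists_mem_unitary_add_star_eq_two_smul {a : A} (ha : IsSelfAdjoint a)
    (ha₁ : ‖a‖ ≤ 1) : ∃ u ∈ unitary A, u + star u = (2 : ℂ) • a := by
  refine ⟨_, ha.self_add_I_smul_cfcSqrt_sub_sq_mem_unitary a ha₁, ?_⟩
  have hsqrt : IsSelfAdjoint (CFC.sqrt (1 - a ^ 2)) := (CFC.sqrt_nonneg _).isSelfAdjoint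
  rw [star_add, star_smul, ha.star_eq, hsqrt.star_eq, Complex.star_def, Complex.conj_I]
  module

lemma IsUnit.exists_mem_unitary_add_eq_two_smul {b : A} (hb : IsUnit b) (hb₁ : ‖b‖ ≤ 1) :
    ∃ u ∈ unitary A, ∃ v ∈ unitary A, u + v = (2 : ℂ) • b := by
  obtain ⟨s, hs, hs_add⟩ := (CFC.abs_nonneg b).isSelfAdjoint.exists_mem_unitary_add_star_eq_two_smul
    (by rwa [CFC.norm_abs])
  have hpolar : b * Ring.inverse (CFC.abs b) * CFC.abs b = b := by
    rw [mul_assoc, Ring.inverse_mul_cancel _ hb.cfcAbs, mul_one]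
  refine ⟨_, mul_mem hb.mul_inverse_cfcAbs_mem_unitary hs,
    _, mul_mem hb.mul_inverse_cfcAbs_mem_unitary (Unitary.star_mem hs), ?_⟩
  rw [← mul_add, hs_add, mul_smul_comm, hpolar]

lemma CStarAlgebra.exists_mem_unitary_add_add_eq_of_norm_lt_one {a : A} (ha : ‖a‖ < 1) :
    ∃ u ∈ unitary A, ∃ v ∈ unitary A, ∃ w ∈ unitary A, u + v + w = a := by
  have hunit : IsUnit ((2⁻¹ : ℂ) • (1 + a)) := by
    rw [Algebra.smul_def, ← sub_neg_eq_add]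
    exact ((isUnit_iff_ne_zero.2 (by norm_num)).map (algebraMap ℂ A)).mul
      (isUnit_one_sub_of_norm_lt_one (by rwa [norm_neg]))
  have hnorm : ‖(2⁻¹ : ℂ) • (1 + a)‖ ≤ 1 := by
    have h1 : ‖(1 : A)‖ ≤ 1 := by
      obtain _ | _ := subsingleton_or_nontrivial A
      · simp [Subsingleton.elim (1 : A) 0]
      · rw [CStarRing.norm_one]
    calc ‖(2⁻¹ : ℂ) • (1 + a)‖ ≤ 2⁻¹ * (‖(1 : A)‖ + ‖a‖) := by
          rw [norm_smul, norm_inv, Complex.norm_two]; gcongr; exact norm_add_le _ _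
      _ ≤ 1 := by linarith
  obtain ⟨u, hu, v, hv, huv⟩ := hunit.exists_mem_unitary_add_eq_two_smul hnorm
  refine ⟨u, hu, v, hv, -1, (-1 : unitary A).2, ?_⟩
  rw [huv, smul_inv_smul₀ two_ne_zero]
  abel

end CStarAlgebra

section InnerProductSpace

variable {ι ι' 𝕜 E F : Type*} [RCLike 𝕜] [NormedAddCommGroup E] [InnerProductSpace 𝕜 E]
  [NormedAddCommGroup F] [InnerProductSpace 𝕜 F]

lemma Orthonormal.countable [TopologicalSpace.SeparableSpace E] {v : ι → E}
    (hv : Orthonormal 𝕜 v) : Countable ι := by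
  refine Pairwise.countable_of_isOpen_disjoint (s := fun i ↦ Metric.ball (v i) 2⁻¹)
    (fun i j hij ↦ Metric.ball_disjoint_ball ?_) (fun _ ↦ Metric.isOpen_ball)
    (fun _ ↦ Metric.nonempty_ball.2 (by norm_num))
  have hsq : ‖v i - v j‖ ^ 2 = 2 := by
    rw [@norm_sub_sq 𝕜, hv.1 i, hv.1 j, hv.2 hij]
    norm_num
  rw [dist_eq_norm]
  nlinarith [norm_nonneg (v i - v j)]

namespace HilbertBasis

lemma finiteDimensional [Finite ι] (b : HilbertBasis ι 𝕜 E) : FiniteDimensional 𝕜 E :=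
  have := Fintype.ofFinite ι
  b.toOrthonormalBasis.toBasis.finiteDimensional_of_finite

protected noncomputable def reindex [CompleteSpace E] (b : HilbertBasis ι 𝕜 E) (e : ι ≃ ι') :
    HilbertBasis ι' 𝕜 E :=
  HilbertBasis.mk (b.orthonormal.comp _ e.symm.injective)
    (by rw [e.symm.surjective.range_comp]; exact b.dense_span.ge)

protected noncomputable def map (b : HilbertBasis ι 𝕜 E) (U : E ≃ₗᵢ[𝕜] F) : HilbertBasis ι 𝕜 F :=
  ofRepr (U.symm.trans b.repr)

@[simp]
lemma map_apply (b : HilbertBasis ι 𝕜 E) (U : E ≃ₗᵢ[𝕜] F) (i : ι) : b.map U i = U (b i) := by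
  classical
  rw [← (b.map U).repr_symm_single, ← b.repr_symm_single]
  rfl

end HilbertBasis

lemma exists_hilbertBasis_nat [CompleteSpace E] [TopologicalSpace.SeparableSpace E]
    (h : ¬ FiniteDimensional 𝕜 E) : Nonempty (HilbertBasis ℕ 𝕜 E) := by
  obtain ⟨w, b, -⟩ := exists_hilbertBasis 𝕜 E
  have := b.orthonormal.countable
  have : Infinite w := not_finite_iff_infinite.1 fun _ ↦ h b.finiteDimensional
  obtain ⟨_⟩ := nonempty_denumerable w
  exact ⟨b.reindex (Denumerable.eqv w)⟩

end InnerProductSpace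

lemma HilbertBasis.exists_apply_eq_add_add_of_norm_lt_one {ι H : Type*} [NormedAddCommGroup H]
    [InnerProductSpace ℂ H] [CompleteSpace H] (b : HilbertBasis ι ℂ H) {S : H →L[ℂ] H}
    (hS : ‖S‖ < 1) : ∃ e₁ e₂ e₃ : HilbertBasis ι ℂ H, ∀ i, S (b i) = e₁ i + e₂ i + e₃ i := by
  obtain ⟨u, hu, v, hv, w, hw, rfl⟩ := CStarAlgebra.exists_mem_unitary_add_add_eq_of_norm_lt_one hS
  exact ⟨b.map (Unitary.linearIsometryEquiv ⟨u, hu⟩), b.map (Unitary.linearIsometryEquiv ⟨v, hv⟩),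
    b.map (Unitary.linearIsometryEquiv ⟨w, hw⟩), fun i ↦ by simp only [HilbertBasis.map_apply]; rfl⟩

theorem frame_eq_sum_of_three_onbs_general
    {H : Type*} [NormedAddCommGroup H] [InnerProductSpace ℂ H]
    [CompleteSpace H] [TopologicalSpace.SeparableSpace H]
    (hinf : ¬ FiniteDimensional ℂ H)
    (f : ℕ → H)
    (T : lp (fun _ : ℕ => ℂ) 2 →L[ℂ] H)
    (hT : ∀ c : lp (fun _ : ℕ => ℂ) 2, T c = ∑' k, c k • f k)
    (ε : ℝ) (hε : ε ∈ Set.Ioo (0 : ℝ) 1) :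
    ∃ e₁ e₂ e₃ : HilbertBasis ℕ ℂ H, ∀ k : ℕ,
      f k = (‖T‖ / (1 - ε)) • (e₁ k + e₂ k + e₃ k) := by
  obtain ⟨β⟩ := exists_hilbertBasis_nat hinf
  set S : H →L[ℂ] H := T ∘L (β.repr : H →L[ℂ] lp (fun _ : ℕ => ℂ) 2)
  have hS : ∀ k, S (β k) = f k := fun k ↦ by
    simp [S, β.repr_self, hT, lp.single_apply, Pi.single_apply]
  rcases eq_or_ne T 0 with rfl | hT₀
  · exact ⟨β, β, β, fun k ↦ by simp [← hS, S]⟩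
  set r := ‖T‖ / (1 - ε)
  have hr : 0 < r := div_pos (norm_pos_iff.2 hT₀) (sub_pos.2 hε.2)
  have hS_norm : ‖r⁻¹ • S‖ < 1 := calc
    ‖r⁻¹ • S‖ = r⁻¹ * ‖T‖ := by
      rw [norm_smul, Real.norm_of_nonneg (inv_nonneg.2 hr.le), T.opNorm_comp_linearIsometryEquiv]
    _ = 1 - ε := by simp only [r, inv_div]; field_simp
    _ < 1 := by linarith [hε.1]
  obtain ⟨e₁, e₂, e₃, he⟩ := β.exists_apply_eq_add_add_of_norm_lt_one hS_norm
  refine ⟨e₁, e₂, e₃, fun k ↦ ?_⟩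
  rw [← he, smul_apply, smul_inv_smul₀ hr.ne', hS]

/-- Every frame `(f_k)` for an infinite-dimensional separable complex Hilbert
space `H`, with synthesis operator `T : ℓ²(ℕ) → H`, is, for every `ε ∈ (0,1)`,
a multiple `‖T‖/(1-ε)` of the sum of three orthonormal bases of `H`. -/
theorem frame_eq_sum_of_three_onbs
    {H : Type*} [NormedAddCommGroup H] [InnerProductSpace ℂ H]
    [CompleteSpace H] [TopologicalSpace.SeparableSpace H]
    (hinf : ¬ FiniteDimensional ℂ H)
    (f : ℕ → H) (A B : ℝ) (hA : 0 < A) (hAB : A ≤ B)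
    (hframe : ∀ x : H, A * ‖x‖ ^ 2 ≤ ∑' k, ‖⟪x, f k⟫_ℂ‖ ^ 2 ∧
      ∑' k, ‖⟪x, f k⟫_ℂ‖ ^ 2 ≤ B * ‖x‖ ^ 2)
    (T : lp (fun _ : ℕ => ℂ) 2 →L[ℂ] H)
    (hT : ∀ c : lp (fun _ : ℕ => ℂ) 2, T c = ∑' k, c k • f k)
    (ε : ℝ) (hε : ε ∈ Set.Ioo (0 : ℝ) 1) :
    ∃ e₁ e₂ e₃ : HilbertBasis ℕ ℂ H, ∀ k : ℕ,
      f k = (‖T‖ / (1 - ε)) • (e₁ k + e₂ k + e₃ k) :=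
  frame_eq_sum_of_three_onbs_general hinf f T hT ε hε
end

section
/- Let H be a complex Hilbert space, (f_n)_{n∈ℕ} a frame for H, and let (m_k)_{k∈ℕ} and (n_k)_{k∈ℕ} be two strictly increasing sequences of natural numbers whose ranges have union ℕ. If the intersection of the closed linear span of (f_{m_k})_k with the closed linear span of (f_{n_k})_k is finite-dimensional, then (f_{m_k})_k and (f_{n_k})_k are both frame sequences, i.e. each is a frame for the closure of its own linear span. -/
/-!
The synthesis operator `T_m : ℓ² → H, c ↦ ∑ c_k f_{m_k}` has dense range in
`M = closed span (f_{m_k})`, and a Bessel sequence is a frame sequence as soon as its synthesis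
operator has closed range (open mapping theorem). The synthesis operator of the frame `(f_n)` is
onto `H` and every index is some `m_k` or some `n_k`, so every vector is `T_m c + v` with `v` in
`N = closed span (f_{n_k})`; for vectors of `M` this gives `M = range T_m + (M ∩ N)`. An operator
range that becomes closed after adding a finite-dimensional subspace is itself closed, hence
`range T_m = M`.
-/

open scoped InnerProductSpace lp
open Function Submodule

noncomputable section

theorem lp.norm_sq_eq_tsum_norm_sq {ι : Type*} {E : ι → Type*} [∀ i, NormedAddCommGroup (E i)]
    (c : lp E 2) : ‖c‖ ^ 2 = ∑' i, ‖c i‖ ^ 2 := by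
  simpa only [ENNReal.toReal_ofNat, Real.rpow_two] using
    lp.norm_rpow_eq_tsum (p := 2) (by norm_num) c

theorem lp.summable_norm_sq {ι : Type*} {E : ι → Type*} [∀ i, NormedAddCommGroup (E i)]
    (c : lp E 2) : Summable fun i => ‖c i‖ ^ 2 := by
  simpa only [ENNReal.toReal_ofNat, Real.rpow_two] using
    (lp.memℓp c).summable (p := 2) (by norm_num)

theorem memℓp_two_of_summable {ι : Type*} {E : ι → Type*} [∀ i, NormedAddCommGroup (E i)]
    {c : ∀ i, E i} (hc : Summable fun i => ‖c i‖ ^ 2) : Memℓp c 2 :=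
  memℓp_gen (by simpa only [ENNReal.toReal_ofNat, Real.rpow_two] using hc)

theorem ContinuousLinearMap.isClosed_range_of_injective_of_isClosed_sup
    {𝕜 E F : Type*} [NontriviallyNormedField 𝕜] [CompleteSpace 𝕜]
    [NormedAddCommGroup E] [NormedSpace 𝕜 E] [CompleteSpace E]
    [NormedAddCommGroup F] [NormedSpace 𝕜 F] [CompleteSpace F]
    (T : E →L[𝕜] F) (hT : Injective T) (V : Submodule 𝕜 F) [FiniteDimensional 𝕜 V]
    (hclosed : IsClosed ((T.range ⊔ V : Submodule 𝕜 F) : Set F)) :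
    IsClosed (T.range : Set F) := by
  obtain ⟨G, hdisj, hsup⟩ :=
    IsModularLattice.exists_disjoint_and_sup_eq (inf_le_right : T.range ⊓ V ≤ V)
  have hGV : G ≤ V := hsup ▸ le_sup_right
  have : FiniteDimensional 𝕜 G := finiteDimensional_of_le hGV
  have : CompleteSpace G := FiniteDimensional.complete 𝕜 G
  have hdisj' : Disjoint T.range G := disjoint_iff.2 <| by
    rw [← inf_eq_right.2 hGV, ← inf_assoc, hdisj.eq_bot]
  have hsup' : T.range ⊔ G = T.range ⊔ V := by
    rw [← hsup, ← sup_assoc, sup_inf_self]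
  -- `(x, g) ↦ T x + g` is injective with closed range, hence bounded below, and so is `T`.
  set Φ : E × G →L[𝕜] F := T.coprod G.subtypeL
  have hΦinj : Injective Φ := (injective_iff_map_eq_zero Φ).2 fun ⟨x, g⟩ h => by
    have hTx : T x = -(g : F) := eq_neg_of_add_eq_zero_left h
    have hg : (g : F) = 0 := by
      have : (g : F) ∈ T.range ⊓ G := ⟨⟨-x, by simp [hTx]⟩, g.2⟩
      rwa [hdisj'.eq_bot, mem_bot] at this
    have hx : x = 0 := hT (by rw [hTx, hg, neg_zero, map_zero])
    simpa [hx] using hg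
  have hΦclosed : IsClosed (Set.range Φ) := by
    have : Set.range Φ = ((T.range ⊔ G : Submodule 𝕜 F) : Set F) := by
      have h := LinearMap.range_coprod (T : E →ₗ[𝕜] F) G.subtype
      rw [G.range_subtype] at h
      rw [← h, LinearMap.coe_range]
      rfl
    rwa [this, hsup']
  obtain ⟨K, hK⟩ := Φ.antilipschitz_of_injective_of_isClosed_range hΦinj hΦclosed
  have hTK : AntilipschitzWith K T := by
    have hΦinl : ⇑Φ ∘ AddMonoidHom.inl E G = T := funext fun x => by simp [Φ]
    simpa [hΦinl] using hK.comp (Isometry.inl (α := E) (β := G)).antilipschitz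
  rw [LinearMap.coe_range]
  exact hTK.isClosed_range T.uniformContinuous

theorem ContinuousLinearMap.isClosed_range_of_isClosed_sup
    {𝕜 X Y : Type*} [RCLike 𝕜] [NormedAddCommGroup X] [InnerProductSpace 𝕜 X] [CompleteSpace X]
    [NormedAddCommGroup Y] [NormedSpace 𝕜 Y] [CompleteSpace Y]
    (T : X →L[𝕜] Y) (V : Submodule 𝕜 Y) [FiniteDimensional 𝕜 V]
    (hclosed : IsClosed ((T.range ⊔ V : Submodule 𝕜 Y) : Set Y)) :
    IsClosed (T.range : Set Y) := by
  have : CompleteSpace T.ker := T.isClosed_ker.completeSpace_coe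
  set K := T.kerᗮ
  set T₀ := T ∘L K.subtypeL
  have hrange : T₀.range = T.range := by
    refine le_antisymm (LinearMap.range_comp_le_range _ _) ?_
    rintro _ ⟨x, rfl⟩
    obtain ⟨u, hu, k, hk, rfl⟩ := T.ker.exists_add_mem_mem_orthogonal x
    exact ⟨⟨k, hk⟩, by simpa [T₀] using hu⟩
  have hinj : Injective T₀ := (injective_iff_map_eq_zero T₀).2 fun k hk => by
    have : (k : X) ∈ T.ker ⊓ K := ⟨hk, k.2⟩
    rw [inf_orthogonal_eq_bot, mem_bot] at this
    exact Subtype.ext this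
  rw [← hrange] at hclosed ⊢
  exact T₀.isClosed_range_of_injective_of_isClosed_sup hinj V hclosed

variable {𝕜 ι κ κ' H : Type*} [RCLike 𝕜] [NormedAddCommGroup H] [InnerProductSpace 𝕜 H]

variable (𝕜) in
def IsBesselSequence (g : ι → H) (B : ℝ) : Prop :=
  ∀ x : H, Summable (fun j => ‖⟪x, g j⟫_𝕜‖ ^ 2) ∧ ∑' j, ‖⟪x, g j⟫_𝕜‖ ^ 2 ≤ B * ‖x‖ ^ 2

variable (𝕜) in
def IsFrameSequence (g : ι → H) : Prop :=
  ∃ A B : ℝ, 0 < A ∧ A ≤ B ∧ ∀ x ∈ (span 𝕜 (Set.range g)).topologicalClosure,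
    A * ‖x‖ ^ 2 ≤ ∑' j, ‖⟪x, g j⟫_𝕜‖ ^ 2 ∧ ∑' j, ‖⟪x, g j⟫_𝕜‖ ^ 2 ≤ B * ‖x‖ ^ 2

theorem isBesselSequence_of_frame_bounds {g : ι → H} {A B : ℝ} (hA : 0 < A)
    (hframe : ∀ x : H, A * ‖x‖ ^ 2 ≤ ∑' j, ‖⟪x, g j⟫_𝕜‖ ^ 2 ∧
      ∑' j, ‖⟪x, g j⟫_𝕜‖ ^ 2 ≤ B * ‖x‖ ^ 2) :
    IsBesselSequence 𝕜 g B := by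
  refine fun x => ⟨?_, (hframe x).2⟩
  by_contra hns
  have hx : ‖x‖ ^ 2 ≤ 0 := by
    have := (hframe x).1
    rw [tsum_eq_zero_of_not_summable hns] at this
    nlinarith
  have hx : x = 0 := by simpa using hx
  exact hns (by simp [hx])

namespace IsBesselSequence

variable {g : ι → H} {B : ℝ}

theorem comp_injective (hg : IsBesselSequence 𝕜 g B) {e : κ → ι} (he : Injective e) :
    IsBesselSequence 𝕜 (g ∘ e) B := fun x =>
  ⟨(hg x).1.comp_injective he,
    (tsum_comp_le_tsum_of_inj (hg x).1 (fun _ => sq_nonneg _) he).trans (hg x).2⟩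

def analysisₗ (hg : IsBesselSequence 𝕜 g B) : H →ₗ[𝕜] ℓ²(ι, 𝕜) where
  toFun x := ⟨fun j => ⟪g j, x⟫_𝕜, memℓp_two_of_summable <| by
    simpa only [norm_inner_symm] using (hg x).1⟩
  map_add' x y := by ext j; exact inner_add_right _ _ _
  map_smul' a x := by ext j; exact inner_smul_right _ _ _

theorem norm_analysisₗ_sq (hg : IsBesselSequence 𝕜 g B) (x : H) :
    ‖hg.analysisₗ x‖ ^ 2 = ∑' j, ‖⟪x, g j⟫_𝕜‖ ^ 2 := by
  rw [lp.norm_sq_eq_tsum_norm_sq]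
  exact tsum_congr fun j => by rw [← norm_inner_symm]; rfl

def analysis (hg : IsBesselSequence 𝕜 g B) : H →L[𝕜] ℓ²(ι, 𝕜) :=
  hg.analysisₗ.mkContinuous √B fun x => by
    rw [← Real.sqrt_sq (norm_nonneg x), ← Real.sqrt_mul' _ (sq_nonneg _)]
    exact Real.le_sqrt_of_sq_le ((hg.norm_analysisₗ_sq x).trans_le (hg x).2)

@[simp]
theorem analysis_apply (hg : IsBesselSequence 𝕜 g B) (x : H) (j : ι) :
    hg.analysis x j = ⟪g j, x⟫_𝕜 := rfl

theorem norm_analysis_sq (hg : IsBesselSequence 𝕜 g B) (x : H) :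
    ‖hg.analysis x‖ ^ 2 = ∑' j, ‖⟪x, g j⟫_𝕜‖ ^ 2 :=
  hg.norm_analysisₗ_sq x

variable [CompleteSpace H]

def synthesis (hg : IsBesselSequence 𝕜 g B) : ℓ²(ι, 𝕜) →L[𝕜] H :=
  ContinuousLinearMap.adjoint hg.analysis

theorem synthesis_single [DecidableEq ι] (hg : IsBesselSequence 𝕜 g B) (j : ι) (a : 𝕜) :
    hg.synthesis (lp.single 2 j a) = a • g j := by
  refine ext_inner_left 𝕜 fun x => ?_
  rw [synthesis, ContinuousLinearMap.adjoint_inner_right, lp.inner_single_right, analysis_apply,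
    inner_smul_right, RCLike.inner_apply, inner_conj_symm, mul_comm]

theorem hasSum_synthesis (hg : IsBesselSequence 𝕜 g B) (c : ℓ²(ι, 𝕜)) :
    HasSum (fun j => c j • g j) (hg.synthesis c) := by
  classical
  simpa only [hg.synthesis_single] using
    (lp.hasSum_single ENNReal.ofNat_ne_top c).mapL hg.synthesis

theorem inner_synthesis_analysis (hg : IsBesselSequence 𝕜 g B) (x : H) :
    ⟪hg.synthesis (hg.analysis x), x⟫_𝕜 = ((∑' j, ‖⟪x, g j⟫_𝕜‖ ^ 2 : ℝ) : 𝕜) := by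
  rw [synthesis, ContinuousLinearMap.adjoint_inner_left, inner_self_eq_norm_sq_to_K,
    ← RCLike.ofReal_pow, norm_analysis_sq]

theorem surjective_synthesis (hg : IsBesselSequence 𝕜 g B) {A : ℝ} (hA : 0 < A)
    (hlow : ∀ x : H, A * ‖x‖ ^ 2 ≤ ∑' j, ‖⟪x, g j⟫_𝕜‖ ^ 2) :
    Surjective hg.synthesis := by
  have hunit : IsUnit (hg.synthesis ∘L hg.analysis) := by
    refine ContinuousLinearMap.isUnit_of_forall_le_norm_inner_map _ (c := ⟨A, hA.le⟩) hA
      fun x => ?_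
    rw [ContinuousLinearMap.comp_apply, hg.inner_synthesis_analysis, RCLike.norm_ofReal,
      abs_of_nonneg (tsum_nonneg fun _ => sq_nonneg _), mul_comm]
    exact hlow x
  exact .of_comp (ContinuousLinearMap.isUnit_iff_bijective.1 hunit).2

theorem range_synthesis_le (hg : IsBesselSequence 𝕜 g B) :
    hg.synthesis.range ≤ (span 𝕜 (Set.range g)).topologicalClosure := by
  rintro _ ⟨c, rfl⟩
  rw [ContinuousLinearMap.coe_coe, ← (hg.hasSum_synthesis c).tsum_eq]
  exact tsum_mem (isClosed_topologicalClosure _) fun j =>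
    le_topologicalClosure _ (smul_mem _ _ (subset_span ⟨j, rfl⟩))

theorem topologicalClosure_range_synthesis (hg : IsBesselSequence 𝕜 g B) :
    hg.synthesis.range.topologicalClosure = (span 𝕜 (Set.range g)).topologicalClosure := by
  classical
  refine le_antisymm (topologicalClosure_minimal _ hg.range_synthesis_le
    (isClosed_topologicalClosure _)) (topologicalClosure_mono ?_)
  rw [span_le]
  rintro _ ⟨j, rfl⟩
  exact ⟨lp.single 2 j 1, by rw [ContinuousLinearMap.coe_coe, hg.synthesis_single, one_smul]⟩

theorem exists_lower_bound_of_isClosed_range (hg : IsBesselSequence 𝕜 g B)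
    (hclosed : IsClosed (hg.synthesis.range : Set H)) :
    ∃ A > 0, ∀ x ∈ hg.synthesis.range, A * ‖x‖ ^ 2 ≤ ∑' j, ‖⟪x, g j⟫_𝕜‖ ^ 2 := by
  have : CompleteSpace hg.synthesis.range := hclosed.completeSpace_coe
  obtain ⟨C, hC, hpre⟩ := (hg.synthesis.codRestrict _ (LinearMap.mem_range_self _))
    |>.exists_preimage_norm_le (LinearMap.surjective_rangeRestrict _)
  refine ⟨(C ^ 2)⁻¹, by positivity, fun x hx => ?_⟩
  obtain ⟨c, hcx, hc⟩ := hpre ⟨x, hx⟩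
  replace hcx : hg.synthesis c = x := congrArg Subtype.val hcx
  replace hc : ‖c‖ ≤ C * ‖x‖ := hc
  have key : ‖x‖ * ‖x‖ ≤ ‖x‖ * (C * ‖hg.analysis x‖) :=
    calc ‖x‖ * ‖x‖ = RCLike.re ⟪x, x⟫_𝕜 := by rw [← inner_self_eq_norm_mul_norm (𝕜 := 𝕜)]
      _ = RCLike.re ⟪hg.analysis x, c⟫_𝕜 := by
          rw [← ContinuousLinearMap.adjoint_inner_right, ← synthesis, hcx]
      _ ≤ ‖hg.analysis x‖ * ‖c‖ := re_inner_le_norm _ _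
      _ ≤ ‖x‖ * (C * ‖hg.analysis x‖) := by
          rw [mul_comm]; nlinarith [norm_nonneg (hg.analysis x)]
  have hbound : ‖x‖ ≤ C * ‖hg.analysis x‖ := by
    rcases (norm_nonneg x).eq_or_lt with hx0 | hx0
    · rw [← hx0]; positivity
    · exact le_of_mul_le_mul_left key hx0
  rw [← hg.norm_analysis_sq, inv_mul_le_iff₀ (by positivity), ← mul_pow]
  exact pow_le_pow_left₀ (norm_nonneg x) hbound 2

theorem isFrameSequence_of_isClosed_range (hg : IsBesselSequence 𝕜 g B)
    (hclosed : IsClosed (hg.synthesis.range : Set H)) : IsFrameSequence 𝕜 g := by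
  obtain ⟨A, hA, hlow⟩ := hg.exists_lower_bound_of_isClosed_range hclosed
  have hrange : hg.synthesis.range = (span 𝕜 (Set.range g)).topologicalClosure := by
    rw [← hg.topologicalClosure_range_synthesis, hclosed.submodule_topologicalClosure_eq]
  refine ⟨A, max A B, hA, le_max_left _ _, fun x hx => ⟨hlow x (hrange ▸ hx), ?_⟩⟩
  exact (hg x).2.trans (mul_le_mul_of_nonneg_right (le_max_right _ _) (sq_nonneg _))

theorem range_synthesis_comp_sup_eq_top (hg : IsBesselSequence 𝕜 g B)
    (hsurj : Surjective hg.synthesis) {e : κ → ι} {e' : κ' → ι} (he : Injective e)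
    (hcover : Set.range e ∪ Set.range e' = Set.univ) :
    (hg.comp_injective he).synthesis.range ⊔ (span 𝕜 (Set.range (g ∘ e'))).topologicalClosure =
      ⊤ := by
  rw [eq_top_iff]
  intro y _
  obtain ⟨c, rfl⟩ := hsurj y
  have hce : Memℓp (c ∘ e) 2 :=
    memℓp_two_of_summable ((lp.summable_norm_sq c).comp_injective he)
  set u := (hg.comp_injective he).synthesis ⟨c ∘ e, hce⟩
  have hu : HasSum ((Set.range e).indicator fun j => c j • g j) u := by
    rw [← he.hasSum_iff fun j hj => Set.indicator_of_notMem hj _]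
    convert (hg.comp_injective he).hasSum_synthesis ⟨c ∘ e, hce⟩ using 1
    exact funext fun k => Set.indicator_of_mem (Set.mem_range_self k) (fun j => c j • g j)
  have hrest : hg.synthesis c - u ∈ (span 𝕜 (Set.range (g ∘ e'))).topologicalClosure := by
    rw [← ((hg.hasSum_synthesis c).sub hu).tsum_eq]
    refine tsum_mem (isClosed_topologicalClosure _) fun j => ?_
    by_cases hj : j ∈ Set.range e
    · simp [hj]
    · obtain ⟨k, rfl⟩ : j ∈ Set.range e' := (hcover ▸ Set.mem_univ j).resolve_left hj
      simpa [hj] using smul_mem _ (c (e' k))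
        (le_topologicalClosure _ (subset_span (Set.mem_range_self (f := g ∘ e') k)))
  exact mem_sup.2 ⟨u, ⟨_, rfl⟩, _, hrest, add_sub_cancel _ _⟩

theorem isClosed_range_synthesis_comp (hg : IsBesselSequence 𝕜 g B)
    (hsurj : Surjective hg.synthesis) {e : κ → ι} {e' : κ' → ι} (he : Injective e)
    (hcover : Set.range e ∪ Set.range e' = Set.univ)
    [FiniteDimensional 𝕜 ↥((span 𝕜 (Set.range (g ∘ e))).topologicalClosure ⊓
      (span 𝕜 (Set.range (g ∘ e'))).topologicalClosure)] :
    IsClosed ((hg.comp_injective he).synthesis.range : Set H) := by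
  set M := (span 𝕜 (Set.range (g ∘ e))).topologicalClosure
  set N := (span 𝕜 (Set.range (g ∘ e'))).topologicalClosure
  set R := (hg.comp_injective he).synthesis.range
  have hsup : R ⊔ M ⊓ N = M := by
    rw [inf_comm, ← sup_inf_assoc_of_le _ (hg.comp_injective he).range_synthesis_le,
      hg.range_synthesis_comp_sup_eq_top hsurj he hcover, top_inf_eq]
  refine (hg.comp_injective he).synthesis.isClosed_range_of_isClosed_sup (M ⊓ N) ?_
  rw [hsup]
  exact isClosed_topologicalClosure _

end IsBesselSequence

end

theorem subfamilies_frame_sequences_general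
    {H : Type*} [NormedAddCommGroup H] [InnerProductSpace ℂ H] [CompleteSpace H]
    (f : ℕ → H) (A B : ℝ) (hA : 0 < A)
    (hframe : ∀ x : H, A * ‖x‖ ^ 2 ≤ ∑' j, ‖⟪x, f j⟫_ℂ‖ ^ 2 ∧
      ∑' j, ‖⟪x, f j⟫_ℂ‖ ^ 2 ≤ B * ‖x‖ ^ 2)
    (m n : ℕ → ℕ) (hm : StrictMono m) (hn : StrictMono n)
    (hcover : Set.range m ∪ Set.range n = Set.univ)
    (hfin : FiniteDimensional ℂ
      ↥((Submodule.span ℂ (Set.range (f ∘ m))).topologicalClosure ⊓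
        (Submodule.span ℂ (Set.range (f ∘ n))).topologicalClosure)) :
    (∃ A₁ B₁ : ℝ, 0 < A₁ ∧ A₁ ≤ B₁ ∧
      ∀ x ∈ (Submodule.span ℂ (Set.range (f ∘ m))).topologicalClosure,
        A₁ * ‖x‖ ^ 2 ≤ ∑' k, ‖⟪x, f (m k)⟫_ℂ‖ ^ 2 ∧
        ∑' k, ‖⟪x, f (m k)⟫_ℂ‖ ^ 2 ≤ B₁ * ‖x‖ ^ 2) ∧
    (∃ A₂ B₂ : ℝ, 0 < A₂ ∧ A₂ ≤ B₂ ∧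
      ∀ x ∈ (Submodule.span ℂ (Set.range (f ∘ n))).topologicalClosure,
        A₂ * ‖x‖ ^ 2 ≤ ∑' k, ‖⟪x, f (n k)⟫_ℂ‖ ^ 2 ∧
        ∑' k, ‖⟪x, f (n k)⟫_ℂ‖ ^ 2 ≤ B₂ * ‖x‖ ^ 2) := by
  have hf : IsBesselSequence ℂ f B := isBesselSequence_of_frame_bounds hA hframe
  have hsurj := hf.surjective_synthesis hA fun x => (hframe x).1
  refine ⟨(hf.comp_injective hm.injective).isFrameSequence_of_isClosed_range
    (hf.isClosed_range_synthesis_comp hsurj hm.injective hcover), ?_⟩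
  rw [inf_comm] at hfin
  exact (hf.comp_injective hn.injective).isFrameSequence_of_isClosed_range
    (hf.isClosed_range_synthesis_comp hsurj hn.injective (Set.union_comm _ _ ▸ hcover))

/-- Let `(f_n)` be a frame for a complex Hilbert space `H` and let `(m_k)`,
`(n_k)` be strictly increasing sequences whose ranges cover `ℕ`. If the
intersection of the closed linear spans of `(f_{m_k})` and `(f_{n_k})` is
finite-dimensional, then both subfamilies are frame sequences, i.e. frames for
the closures of their own linear spans. -/
theorem subfamilies_frame_sequences
    {H : Type*} [NormedAddCommGroup H] [InnerProductSpace ℂ H] [CompleteSpace H]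
    (f : ℕ → H) (A B : ℝ) (hA : 0 < A) (hAB : A ≤ B)
    (hframe : ∀ x : H, A * ‖x‖ ^ 2 ≤ ∑' j, ‖⟪x, f j⟫_ℂ‖ ^ 2 ∧
      ∑' j, ‖⟪x, f j⟫_ℂ‖ ^ 2 ≤ B * ‖x‖ ^ 2)
    (m n : ℕ → ℕ) (hm : StrictMono m) (hn : StrictMono n)
    (hcover : Set.range m ∪ Set.range n = Set.univ)
    (hfin : FiniteDimensional ℂ
      ↥((Submodule.span ℂ (Set.range (f ∘ m))).topologicalClosure ⊓
        (Submodule.span ℂ (Set.range (f ∘ n))).topologicalClosure)) :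
    (∃ A₁ B₁ : ℝ, 0 < A₁ ∧ A₁ ≤ B₁ ∧
      ∀ x ∈ (Submodule.span ℂ (Set.range (f ∘ m))).topologicalClosure,
        A₁ * ‖x‖ ^ 2 ≤ ∑' k, ‖⟪x, f (m k)⟫_ℂ‖ ^ 2 ∧
        ∑' k, ‖⟪x, f (m k)⟫_ℂ‖ ^ 2 ≤ B₁ * ‖x‖ ^ 2) ∧
    (∃ A₂ B₂ : ℝ, 0 < A₂ ∧ A₂ ≤ B₂ ∧
      ∀ x ∈ (Submodule.span ℂ (Set.range (f ∘ n))).topologicalClosure,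
        A₂ * ‖x‖ ^ 2 ≤ ∑' k, ‖⟪x, f (n k)⟫_ℂ‖ ^ 2 ∧
        ∑' k, ‖⟪x, f (n k)⟫_ℂ‖ ^ 2 ≤ B₂ * ‖x‖ ^ 2) :=
  subfamilies_frame_sequences_general f A B hA hframe m n hm hn hcover hfin
end

section
/- Let H be a complex Hilbert space and (f_n)_{n∈ℕ} a frame for H with optimal bounds 0 < A ≤ B (A is the largest valid lower frame bound and B the smallest valid upper frame bound) such that f_n ≠ 0 for all n. Suppose that for every strictly increasing sequence (n_k)_{k∈ℕ} of natural numbers, the subfamily (f_{n_k})_k is a frame sequence whose optimal bounds are again A and B. Then (f_n) is an exact frame: for every m ∈ ℕ, the family (f_n)_{n≠m} is not a frame for H. -/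
/-!
Since `∑ |⟪x, f k⟫|²` converges for every `x`, `⟪f i, f k⟫ → 0` as `k → ∞`, so every infinite
set of indices contains a subsequence whose Gram matrix differs from its diagonal by an
operator of arbitrarily small norm. Such a subsequence is a frame sequence with bounds as close
as we like to the infimum and supremum of `‖f k‖²` over it. If `A < B`, infinitely many `‖f k‖²`
lie on one side of `(A + B) / 2`, and the resulting subsequence has an upper bound below `B` or
a lower bound above `A`, contradicting optimality; so the frame is tight. Testing the lower
bound of `(f m, f (N + 1), f (N + 2), …)` at `f m` and letting `N → ∞` gives `A ≤ ‖f m‖²`.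
Tightness then forces `‖f m‖⁴ + ∑_{j ≠ m} |⟪f m, f j⟫|² = A ‖f m‖² ≤ ‖f m‖⁴`, so `f m` is
orthogonal to every other `f j`, and without `f m` the lower frame inequality fails at `f m`.
-/

open scoped InnerProductSpace ComplexConjugate
open Filter Topology

section

variable {𝕜 E ι : Type*} [RCLike 𝕜] [NormedAddCommGroup E] [InnerProductSpace 𝕜 E]

theorem tsum_subtype_ne_eq_sub {G : Type*} [AddCommGroup G] [UniformSpace G] [IsUniformAddGroup G]
    [CompleteSpace G] [T2Space G] {u : ι → G} (hu : Summable u) (m : ι) :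
    ∑' i : {i // i ≠ m}, u i = ∑' i, u i - u m := by
  rw [← hu.tsum_subtype_add_tsum_subtype_compl {m}, tsum_singleton, add_sub_cancel_left]
  rfl

theorem norm_inner_self_eq_sq (x : E) : ‖⟪x, x⟫_𝕜‖ = ‖x‖ ^ 2 := by
  simp [inner_self_eq_norm_sq_to_K]

theorem summable_norm_inner_sq_of_le_tsum {f : ι → E} {A : ℝ} (hA : 0 < A)
    (h : ∀ x : E, A * ‖x‖ ^ 2 ≤ ∑' j, ‖⟪x, f j⟫_𝕜‖ ^ 2) (x : E) :
    Summable fun j => ‖⟪x, f j⟫_𝕜‖ ^ 2 := by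
  by_contra hns
  have hx : x ≠ 0 := by rintro rfl; exact hns (by simp)
  have := h x
  rw [tsum_eq_zero_of_not_summable hns] at this
  have : 0 < A * ‖x‖ ^ 2 := by positivity
  linarith

theorem tendsto_inner_atTop_of_summable {f : ℕ → E} (x : E)
    (h : Summable fun k => ‖⟪x, f k⟫_𝕜‖ ^ 2) : Tendsto (fun k => ⟪x, f k⟫_𝕜) atTop (𝓝 0) := by
  rw [tendsto_zero_iff_norm_tendsto_zero]
  simpa [Real.sqrt_sq (norm_nonneg _)] using h.tendsto_atTop_zero.sqrt

theorem abs_norm_sq_sum_smul_sub_le [DecidableEq ι] (v : ι → E) (b : ι → ℝ)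
    (hv : Pairwise fun s t => ‖⟪v s, v t⟫_𝕜‖ ≤ b s * b t) (T : Finset ι) (c : ι → 𝕜) :
    |‖∑ t ∈ T, c t • v t‖ ^ 2 - ∑ t ∈ T, ‖c t‖ ^ 2 * ‖v t‖ ^ 2| ≤
      (∑ t ∈ T, b t ^ 2) * ∑ t ∈ T, ‖c t‖ ^ 2 := by
  set G : ι → ι → 𝕜 := fun s t => conj (c s) * c t * ⟪v s, v t⟫_𝕜
  set offDiag := ∑ s ∈ T, ∑ t ∈ T.erase s, G s t
  have hdiag : ∀ s, G s s = ((‖c s‖ ^ 2 * ‖v s‖ ^ 2 : ℝ) : 𝕜) := fun s => by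
    simp only [G, RCLike.conj_mul, inner_self_eq_norm_sq_to_K]; push_cast; ring
  have hexpand : ((‖∑ t ∈ T, c t • v t‖ ^ 2 : ℝ) : 𝕜) =
      ((∑ t ∈ T, ‖c t‖ ^ 2 * ‖v t‖ ^ 2 : ℝ) : 𝕜) + offDiag := by
    rw [RCLike.ofReal_pow, ← inner_self_eq_norm_sq_to_K, sum_inner]
    simp only [inner_sum, inner_smul_left, inner_smul_right, RCLike.ofReal_sum, ← hdiag, offDiag,
      ← Finset.sum_add_distrib]
    refine Finset.sum_congr rfl fun s hs => ?_
    rw [Finset.add_sum_erase T _ hs]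
    exact Finset.sum_congr rfl fun t _ => by simp only [G]; ring
  have hoff : ‖offDiag‖ ≤ (∑ t ∈ T, ‖c t‖ * b t) ^ 2 := by
    calc ‖offDiag‖ ≤ ∑ s ∈ T, ∑ t ∈ T.erase s, (‖c s‖ * b s) * (‖c t‖ * b t) := by
          refine (norm_sum_le _ _).trans (Finset.sum_le_sum fun s _ =>
            (norm_sum_le _ _).trans (Finset.sum_le_sum fun t ht => ?_))
          calc ‖G s t‖ = ‖c s‖ * ‖c t‖ * ‖⟪v s, v t⟫_𝕜‖ := by simp [G]
            _ ≤ ‖c s‖ * ‖c t‖ * (b s * b t) := by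
                gcongr; exact hv (Finset.ne_of_mem_erase ht).symm
            _ = _ := by ring
      _ ≤ ∑ s ∈ T, ∑ t ∈ T, (‖c s‖ * b s) * (‖c t‖ * b t) := by
          refine Finset.sum_le_sum fun s hs => ?_
          rw [← Finset.add_sum_erase T _ hs]
          nlinarith [mul_self_nonneg (‖c s‖ * b s)]
      _ = (∑ t ∈ T, ‖c t‖ * b t) ^ 2 := by rw [← Finset.sum_mul_sum, sq]
  have hre := congrArg RCLike.re hexpand
  simp only [RCLike.ofReal_re, map_add] at hre
  calc |‖∑ t ∈ T, c t • v t‖ ^ 2 - ∑ t ∈ T, ‖c t‖ ^ 2 * ‖v t‖ ^ 2| = |RCLike.re offDiag| := by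
        rw [hre, add_sub_cancel_left]
    _ ≤ (∑ t ∈ T, ‖c t‖ * b t) ^ 2 := (RCLike.abs_re_le_norm _).trans hoff
    _ ≤ (∑ t ∈ T, b t ^ 2) * ∑ t ∈ T, ‖c t‖ ^ 2 := by
        rw [mul_comm]; exact Finset.sum_mul_sq_le_sq_mul_sq T _ _

theorem norm_inner_sum_smul_sq_le (v : ι → E) (x : E) (T : Finset ι) (c : ι → 𝕜) :
    ‖⟪x, ∑ t ∈ T, c t • v t⟫_𝕜‖ ^ 2 ≤ (∑ t ∈ T, ‖c t‖ ^ 2) * ∑ t ∈ T, ‖⟪x, v t⟫_𝕜‖ ^ 2 := by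
  have h : ‖⟪x, ∑ t ∈ T, c t • v t⟫_𝕜‖ ≤ ∑ t ∈ T, ‖c t‖ * ‖⟪x, v t⟫_𝕜‖ := by
    simpa only [inner_sum, inner_smul_right, norm_mul] using
      norm_sum_le T fun t => c t * ⟪x, v t⟫_𝕜
  calc ‖⟪x, ∑ t ∈ T, c t • v t⟫_𝕜‖ ^ 2 ≤ (∑ t ∈ T, ‖c t‖ * ‖⟪x, v t⟫_𝕜‖) ^ 2 := by gcongr
    _ ≤ _ := Finset.sum_mul_sq_le_sq_mul_sq T _ _

theorem sum_norm_inner_sq_le_of_norm_sq_sum_smul_le (v : ι → E) (T : Finset ι) {C : ℝ}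
    (hC : 0 ≤ C) (h : ∀ c : ι → 𝕜, ‖∑ t ∈ T, c t • v t‖ ^ 2 ≤ C * ∑ t ∈ T, ‖c t‖ ^ 2) (x : E) :
    ∑ t ∈ T, ‖⟪x, v t⟫_𝕜‖ ^ 2 ≤ C * ‖x‖ ^ 2 := by
  set S := ∑ t ∈ T, ‖⟪x, v t⟫_𝕜‖ ^ 2
  set y := ∑ t ∈ T, conj ⟪x, v t⟫_𝕜 • v t
  have hS : 0 ≤ S := by positivity
  have hxy : ⟪x, y⟫_𝕜 = (S : 𝕜) := by
    simp only [y, S, inner_sum, inner_smul_right, RCLike.conj_mul, RCLike.ofReal_sum,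
      RCLike.ofReal_pow]
  have hSy : S ≤ ‖x‖ * ‖y‖ := by
    simpa [hxy, abs_of_nonneg hS] using norm_inner_le_norm (𝕜 := 𝕜) x y
  have hy : ‖y‖ ^ 2 ≤ C * S := by
    simpa only [RCLike.norm_conj] using h fun t => conj ⟪x, v t⟫_𝕜
  rcases hS.eq_or_lt with hS0 | hSpos
  · rw [← hS0]; positivity
  · nlinarith [mul_nonneg (norm_nonneg x) (norm_nonneg y)]

theorem le_tsum_norm_inner_sq_of_mem_closure_span (v : ι → E) {C : ℝ}
    (h : ∀ (T : Finset ι) (c : ι → 𝕜), C * ∑ t ∈ T, ‖c t‖ ^ 2 ≤ ‖∑ t ∈ T, c t • v t‖ ^ 2)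
    {x : E} (hx : x ∈ (Submodule.span 𝕜 (Set.range v)).topologicalClosure)
    (hsum : Summable fun t => ‖⟪x, v t⟫_𝕜‖ ^ 2) :
    C * ‖x‖ ^ 2 ≤ ∑' t, ‖⟪x, v t⟫_𝕜‖ ^ 2 := by
  set Q := ∑' t, ‖⟪x, v t⟫_𝕜‖ ^ 2
  have hQ : 0 ≤ Q := tsum_nonneg fun t => by positivity
  rcases lt_or_ge C 0 with hC | hC
  · exact (mul_nonpos_of_nonpos_of_nonneg hC.le (by positivity)).trans hQ
  have hspan : ∀ y ∈ Submodule.span 𝕜 (Set.range v), C * ‖⟪x, y⟫_𝕜‖ ^ 2 ≤ Q * ‖y‖ ^ 2 := by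
    intro y hy
    obtain ⟨d, rfl⟩ := Finsupp.mem_span_range_iff_exists_finsupp.mp hy
    set T := d.support
    have hQT : ∑ t ∈ T, ‖⟪x, v t⟫_𝕜‖ ^ 2 ≤ Q := hsum.sum_le_tsum T fun t _ => by positivity
    calc C * ‖⟪x, ∑ t ∈ T, d t • v t⟫_𝕜‖ ^ 2 ≤ C * ((∑ t ∈ T, ‖d t‖ ^ 2) * Q) := by
          gcongr; exact (norm_inner_sum_smul_sq_le v x T d).trans (by gcongr)
      _ = (C * ∑ t ∈ T, ‖d t‖ ^ 2) * Q := by ring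
      _ ≤ ‖∑ t ∈ T, d t • v t‖ ^ 2 * Q := by gcongr; exact h T d
      _ = Q * ‖∑ t ∈ T, d t • v t‖ ^ 2 := mul_comm _ _
  have hclosed : IsClosed {y : E | C * ‖⟪x, y⟫_𝕜‖ ^ 2 ≤ Q * ‖y‖ ^ 2} :=
    isClosed_le (by fun_prop) (by fun_prop)
  have hxx : C * ‖⟪x, x⟫_𝕜‖ ^ 2 ≤ Q * ‖x‖ ^ 2 :=
    closure_minimal hspan hclosed (by rwa [← Submodule.topologicalClosure_coe])
  rw [norm_inner_self_eq_sq] at hxx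
  rcases (sq_nonneg ‖x‖).eq_or_lt with hx0 | hxpos
  · rw [← hx0, mul_zero]; exact hQ
  · nlinarith

theorem exists_strictMono_norm_inner_le {f : ℕ → E}
    (hf : ∀ i, Tendsto (fun k => ⟪f i, f k⟫_𝕜) atTop (𝓝 0)) {M : Set ℕ} (hM : M.Infinite)
    {ε : ℕ → ℝ} (hε : ∀ t, 0 < ε t) :
    ∃ g : ℕ → ℕ, StrictMono g ∧ (∀ t, g t ∈ M) ∧
      ∀ s t, s < t → ‖⟪f (g s), f (g t)⟫_𝕜‖ ≤ ε t := by
  have hnext : ∀ p t : ℕ, ∃ k, k ∈ M ∧ p < k ∧ ∀ i ∈ Set.Iic p, ‖⟪f i, f k⟫_𝕜‖ ≤ ε (t + 1) := by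
    intro p t
    have hsmall : ∀ᶠ k in atTop, ∀ i ∈ Set.Iic p, ‖⟪f i, f k⟫_𝕜‖ ≤ ε (t + 1) :=
      (eventually_all_finite (Set.finite_Iic p)).2 fun i _ =>
        (tendsto_zero_iff_norm_tendsto_zero.1 (hf i)).eventually (ge_mem_nhds (hε _))
    exact ((Nat.frequently_atTop_iff_infinite.2 hM).and_eventually
      ((eventually_gt_atTop p).and hsmall)).exists
  choose next hnextM hnextgt hnextsmall using hnext
  obtain ⟨k₀, hk₀⟩ := hM.nonempty
  let g : ℕ → ℕ := fun n => Nat.rec k₀ (fun t prev => next prev t) n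
  have hg : StrictMono g := strictMono_nat_of_lt_succ fun t => hnextgt (g t) t
  refine ⟨g, hg, fun t => ?_, fun s t hst => ?_⟩
  · cases t with
    | zero => exact hk₀
    | succ t => exact hnextM (g t) t
  · obtain ⟨t, rfl⟩ : ∃ t', t = t' + 1 := ⟨t - 1, by omega⟩
    exact hnextsmall (g t) t (g s) (hg.monotone (Nat.lt_succ_iff.1 hst))

theorem exists_strictMono_abs_norm_sq_sum_smul_sub_le {f : ℕ → E}
    (hf : ∀ i, Tendsto (fun k => ⟪f i, f k⟫_𝕜) atTop (𝓝 0)) {M : Set ℕ} (hM : M.Infinite)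
    {δ : ℝ} (hδ : 0 < δ) :
    ∃ g : ℕ → ℕ, StrictMono g ∧ (∀ t, g t ∈ M) ∧ ∀ (T : Finset ℕ) (c : ℕ → 𝕜),
      |‖∑ t ∈ T, c t • f (g t)‖ ^ 2 - ∑ t ∈ T, ‖c t‖ ^ 2 * ‖f (g t)‖ ^ 2| ≤
        δ * ∑ t ∈ T, ‖c t‖ ^ 2 := by
  set b : ℕ → ℝ := fun t => √δ / 2 * (1 / 2) ^ t
  have hb : ∀ t, 0 < b t := fun t => by positivity
  have hb_anti : Antitone b := fun s t hst => by
    simp only [b]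
    exact mul_le_mul_of_nonneg_left (pow_le_pow_of_le_one (by norm_num) (by norm_num) hst)
      (by positivity)
  have hb_sq : ∀ t, b t ^ 2 = δ / 4 * (1 / 4) ^ t := fun t => by
    rw [mul_pow, div_pow, Real.sq_sqrt hδ.le, ← pow_mul, mul_comm t 2, pow_mul]
    norm_num
  have hb_sum : ∀ T : Finset ℕ, ∑ t ∈ T, b t ^ 2 ≤ δ := fun T => by
    have hgeom : Summable fun t : ℕ => δ / 4 * (1 / 4 : ℝ) ^ t :=
      (summable_geometric_of_lt_one (by norm_num) (by norm_num)).mul_left _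
    calc ∑ t ∈ T, b t ^ 2 ≤ ∑' t, δ / 4 * (1 / 4 : ℝ) ^ t := by
          simp only [hb_sq]; exact hgeom.sum_le_tsum T fun t _ => by positivity
      _ = δ / 3 := by rw [tsum_mul_left, tsum_geometric_of_lt_one (by norm_num) (by norm_num)]; ring
      _ ≤ δ := by linarith
  obtain ⟨g, hg, hgM, hpair⟩ := exists_strictMono_norm_inner_le hf hM fun t => pow_pos (hb t) 2
  have hv : Pairwise fun s t => ‖⟪f (g s), f (g t)⟫_𝕜‖ ≤ b s * b t := by
    have hlt : ∀ s t, s < t → ‖⟪f (g s), f (g t)⟫_𝕜‖ ≤ b s * b t := fun s t hst =>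
      (hpair s t hst).trans (by rw [sq]; gcongr; exact hb_anti hst.le)
    intro s t hst
    rcases hst.lt_or_gt with h | h
    · exact hlt s t h
    · rw [norm_inner_symm, mul_comm]; exact hlt t s h
  exact ⟨g, hg, hgM, fun T c =>
    (abs_norm_sq_sum_smul_sub_le _ b hv T c).trans (by gcongr; exact hb_sum T)⟩

theorem exists_strictMono_tsum_norm_inner_sq_le {f : ℕ → E}
    (hf : ∀ i, Tendsto (fun k => ⟪f i, f k⟫_𝕜) atTop (𝓝 0)) {M : Set ℕ} (hM : M.Infinite)
    {R : ℝ} (hR : ∀ k ∈ M, ‖f k‖ ^ 2 ≤ R) {δ : ℝ} (hδ : 0 < δ) :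
    ∃ g : ℕ → ℕ, StrictMono g ∧ ∀ x, ∑' k, ‖⟪x, f (g k)⟫_𝕜‖ ^ 2 ≤ (R + δ) * ‖x‖ ^ 2 := by
  obtain ⟨g, hg, hgM, hgram⟩ := exists_strictMono_abs_norm_sq_sum_smul_sub_le hf hM hδ
  obtain ⟨k, hk⟩ := hM.nonempty
  have hR0 : 0 ≤ R := (sq_nonneg _).trans (hR k hk)
  refine ⟨g, hg, fun x => Real.tsum_le_of_sum_le (fun k => by positivity) fun T => ?_⟩
  refine sum_norm_inner_sq_le_of_norm_sq_sum_smul_le _ T (by positivity) (fun c => ?_) x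
  have hdiag : ∑ t ∈ T, ‖c t‖ ^ 2 * ‖f (g t)‖ ^ 2 ≤ R * ∑ t ∈ T, ‖c t‖ ^ 2 := by
    rw [Finset.mul_sum]
    exact Finset.sum_le_sum fun t _ => by rw [mul_comm R]; gcongr; exact hR _ (hgM t)
  linarith [(abs_le.1 (hgram T c)).2]

theorem exists_strictMono_le_tsum_norm_inner_sq {f : ℕ → E}
    (hsum : ∀ x, Summable fun k => ‖⟪x, f k⟫_𝕜‖ ^ 2) {M : Set ℕ} (hM : M.Infinite)
    {r : ℝ} (hr : ∀ k ∈ M, r ≤ ‖f k‖ ^ 2) {δ : ℝ} (hδ : 0 < δ) :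
    ∃ g : ℕ → ℕ, StrictMono g ∧
      ∀ x ∈ (Submodule.span 𝕜 (Set.range (f ∘ g))).topologicalClosure,
        (r - δ) * ‖x‖ ^ 2 ≤ ∑' k, ‖⟪x, f (g k)⟫_𝕜‖ ^ 2 := by
  obtain ⟨g, hg, hgM, hgram⟩ := exists_strictMono_abs_norm_sq_sum_smul_sub_le
    (fun i => tendsto_inner_atTop_of_summable (f i) (hsum (f i))) hM hδ
  refine ⟨g, hg, fun x hx => le_tsum_norm_inner_sq_of_mem_closure_span (f ∘ g) (fun T c => ?_) hx
    ((hsum x).comp_injective hg.injective)⟩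
  have hdiag : r * ∑ t ∈ T, ‖c t‖ ^ 2 ≤ ∑ t ∈ T, ‖c t‖ ^ 2 * ‖f (g t)‖ ^ 2 := by
    rw [Finset.mul_sum]
    exact Finset.sum_le_sum fun t _ => by rw [mul_comm r]; gcongr; exact hr _ (hgM t)
  simp only [Function.comp_apply]
  linarith [(abs_le.1 (hgram T c)).1]

theorem eq_of_subfamily_frame_bounds_optimal {f : ℕ → E}
    (hsum : ∀ x, Summable fun k => ‖⟪x, f k⟫_𝕜‖ ^ 2) {A B : ℝ} (hAB : A ≤ B)
    (hA : ∀ g : ℕ → ℕ, StrictMono g → ∀ A' : ℝ,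
      (∀ x ∈ (Submodule.span 𝕜 (Set.range (f ∘ g))).topologicalClosure,
        A' * ‖x‖ ^ 2 ≤ ∑' k, ‖⟪x, f (g k)⟫_𝕜‖ ^ 2) → A' ≤ A)
    (hB : ∀ g : ℕ → ℕ, StrictMono g → ∀ B' : ℝ,
      (∀ x ∈ (Submodule.span 𝕜 (Set.range (f ∘ g))).topologicalClosure,
        ∑' k, ‖⟪x, f (g k)⟫_𝕜‖ ^ 2 ≤ B' * ‖x‖ ^ 2) → B ≤ B') :
    A = B := by
  by_contra hne
  have hlt : A < B := hAB.lt_of_ne hne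
  have hδ : 0 < (B - A) / 4 := by linarith
  have hcover : {k | ‖f k‖ ^ 2 ≤ (A + B) / 2} ∪ {k | (A + B) / 2 ≤ ‖f k‖ ^ 2} = Set.univ :=
    Set.eq_univ_of_forall fun k => le_total (‖f k‖ ^ 2) ((A + B) / 2)
  rcases Set.infinite_union.1 (hcover ▸ Set.infinite_univ) with hsmall | hlarge
  · obtain ⟨g, hg, hbound⟩ := exists_strictMono_tsum_norm_inner_sq_le
      (fun i => tendsto_inner_atTop_of_summable (f i) (hsum (f i))) hsmall (fun _ hk => hk) hδ
    linarith [hB g hg _ fun x _ => hbound x]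
  · obtain ⟨g, hg, hbound⟩ := exists_strictMono_le_tsum_norm_inner_sq hsum hlarge
      (fun _ hk => hk) hδ
    linarith [hA g hg _ hbound]

theorem le_norm_sq_of_subfamily_lower_bound {f : ℕ → E} {A : ℝ} {m : ℕ}
    (hsum : Summable fun j => ‖⟪f m, f j⟫_𝕜‖ ^ 2) (hm : f m ≠ 0)
    (hlow : ∀ g : ℕ → ℕ, StrictMono g →
      ∀ x ∈ (Submodule.span 𝕜 (Set.range (f ∘ g))).topologicalClosure,
        A * ‖x‖ ^ 2 ≤ ∑' k, ‖⟪x, f (g k)⟫_𝕜‖ ^ 2) :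
    A ≤ ‖f m‖ ^ 2 := by
  set u := fun j => ‖⟪f m, f j⟫_𝕜‖ ^ 2
  have hbound : ∀ N ≥ m,
      A * ‖f m‖ ^ 2 ≤ ‖f m‖ ^ 2 * ‖f m‖ ^ 2 + ∑' k, u (k + (N + 1)) := by
    intro N hN
    let g : ℕ → ℕ := fun k => if k = 0 then m else k + N
    have hg : StrictMono g := strictMono_nat_of_lt_succ fun k => by
      rcases k with _ | k
      · simp [g]; omega
      · simp [g]
    have hmem : f m ∈ (Submodule.span 𝕜 (Set.range (f ∘ g))).topologicalClosure :=
      Submodule.le_topologicalClosure _ (Submodule.subset_span ⟨0, by simp [g]⟩)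
    calc A * ‖f m‖ ^ 2 ≤ ∑' k, u (g k) := hlow g hg _ hmem
      _ = u (g 0) + ∑' k, u (g (k + 1)) := (hsum.comp_injective hg.injective).tsum_eq_zero_add
      _ = _ := by
        congr 1
        · simp only [u, g, if_pos, norm_inner_self_eq_sq]; ring
        · refine tsum_congr fun k => ?_
          simp only [g, Nat.add_one_ne_zero, if_false, add_assoc, add_comm 1 N]
  have htail : Tendsto (fun N => ‖f m‖ ^ 2 * ‖f m‖ ^ 2 + ∑' k, u (k + (N + 1))) atTop
      (𝓝 (‖f m‖ ^ 2 * ‖f m‖ ^ 2)) := by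
    simpa using tendsto_const_nhds.add ((tendsto_sum_nat_add u).comp (tendsto_add_atTop_nat 1))
  have hpos : 0 < ‖f m‖ ^ 2 := by positivity
  exact le_of_mul_le_mul_right (ge_of_tendsto htail (eventually_atTop.2 ⟨m, hbound⟩)) hpos

end

theorem exact_frame_of_optimal_subframe_bounds_general
    {H : Type*} [NormedAddCommGroup H] [InnerProductSpace ℂ H] [CompleteSpace H]
    (f : ℕ → H) (A B : ℝ) (hA : 0 < A) (hAB : A ≤ B)
    (hframe : ∀ x : H, A * ‖x‖ ^ 2 ≤ ∑' j, ‖⟪x, f j⟫_ℂ‖ ^ 2 ∧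
      ∑' j, ‖⟪x, f j⟫_ℂ‖ ^ 2 ≤ B * ‖x‖ ^ 2)
    (hne : ∀ j, f j ≠ 0)
    (hsub : ∀ g : ℕ → ℕ, StrictMono g →
      (∀ x ∈ (Submodule.span ℂ (Set.range (f ∘ g))).topologicalClosure,
        A * ‖x‖ ^ 2 ≤ ∑' k, ‖⟪x, f (g k)⟫_ℂ‖ ^ 2 ∧
        ∑' k, ‖⟪x, f (g k)⟫_ℂ‖ ^ 2 ≤ B * ‖x‖ ^ 2) ∧
      (∀ A' : ℝ,
        (∀ x ∈ (Submodule.span ℂ (Set.range (f ∘ g))).topologicalClosure,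
          A' * ‖x‖ ^ 2 ≤ ∑' k, ‖⟪x, f (g k)⟫_ℂ‖ ^ 2) → A' ≤ A) ∧
      (∀ B' : ℝ,
        (∀ x ∈ (Submodule.span ℂ (Set.range (f ∘ g))).topologicalClosure,
          ∑' k, ‖⟪x, f (g k)⟫_ℂ‖ ^ 2 ≤ B' * ‖x‖ ^ 2) → B ≤ B')) :
    ∀ m : ℕ, ¬ ∃ A' B' : ℝ, 0 < A' ∧ A' ≤ B' ∧ ∀ x : H,
      A' * ‖x‖ ^ 2 ≤ ∑' i : {i : ℕ // i ≠ m}, ‖⟪x, f i.1⟫_ℂ‖ ^ 2 ∧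
      ∑' i : {i : ℕ // i ≠ m}, ‖⟪x, f i.1⟫_ℂ‖ ^ 2 ≤ B' * ‖x‖ ^ 2 := by
  rintro m ⟨A', _, hA', -, hrest⟩
  have hsum := summable_norm_inner_sq_of_le_tsum hA fun x => (hframe x).1
  have htight : A = B := eq_of_subfamily_frame_bounds_optimal hsum hAB
    (fun g hg => (hsub g hg).2.1) (fun g hg => (hsub g hg).2.2)
  have hnorm : A ≤ ‖f m‖ ^ 2 := le_norm_sq_of_subfamily_lower_bound (hsum (f m)) (hne m)
    fun g hg x hx => ((hsub g hg).1 x hx).1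
  have hfm : ∑' j, ‖⟪f m, f j⟫_ℂ‖ ^ 2 = A * ‖f m‖ ^ 2 :=
    le_antisymm (htight ▸ (hframe (f m)).2) (hframe (f m)).1
  have hrest_fm := (hrest (f m)).1
  rw [tsum_subtype_ne_eq_sub (hsum (f m)) m, hfm, norm_inner_self_eq_sq] at hrest_fm
  have hpos : 0 < ‖f m‖ ^ 2 := pow_pos (norm_pos_iff.2 (hne m)) 2
  nlinarith [mul_le_mul_of_nonneg_right hnorm hpos.le]

/-- Let `(f_n)` be a frame for a complex Hilbert space `H` with optimal bounds
`0 < A ≤ B` and `f_n ≠ 0` for all `n`. If every subfamily `(f_{n_k})` along a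
strictly increasing sequence `(n_k)` is a frame sequence whose optimal bounds
are again `A` and `B`, then `(f_n)` is exact: removing any single element
leaves a family that is not a frame for `H`. -/
theorem exact_frame_of_optimal_subframe_bounds
    {H : Type*} [NormedAddCommGroup H] [InnerProductSpace ℂ H] [CompleteSpace H]
    (f : ℕ → H) (A B : ℝ) (hA : 0 < A) (hAB : A ≤ B)
    (hframe : ∀ x : H, A * ‖x‖ ^ 2 ≤ ∑' j, ‖⟪x, f j⟫_ℂ‖ ^ 2 ∧
      ∑' j, ‖⟪x, f j⟫_ℂ‖ ^ 2 ≤ B * ‖x‖ ^ 2)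
    (hAopt : ∀ A' : ℝ, (∀ x : H, A' * ‖x‖ ^ 2 ≤ ∑' j, ‖⟪x, f j⟫_ℂ‖ ^ 2) → A' ≤ A)
    (hBopt : ∀ B' : ℝ, (∀ x : H, ∑' j, ‖⟪x, f j⟫_ℂ‖ ^ 2 ≤ B' * ‖x‖ ^ 2) → B ≤ B')
    (hne : ∀ j, f j ≠ 0)
    (hsub : ∀ g : ℕ → ℕ, StrictMono g →
      (∀ x ∈ (Submodule.span ℂ (Set.range (f ∘ g))).topologicalClosure,
        A * ‖x‖ ^ 2 ≤ ∑' k, ‖⟪x, f (g k)⟫_ℂ‖ ^ 2 ∧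
        ∑' k, ‖⟪x, f (g k)⟫_ℂ‖ ^ 2 ≤ B * ‖x‖ ^ 2) ∧
      (∀ A' : ℝ,
        (∀ x ∈ (Submodule.span ℂ (Set.range (f ∘ g))).topologicalClosure,
          A' * ‖x‖ ^ 2 ≤ ∑' k, ‖⟪x, f (g k)⟫_ℂ‖ ^ 2) → A' ≤ A) ∧
      (∀ B' : ℝ,
        (∀ x ∈ (Submodule.span ℂ (Set.range (f ∘ g))).topologicalClosure,
          ∑' k, ‖⟪x, f (g k)⟫_ℂ‖ ^ 2 ≤ B' * ‖x‖ ^ 2) → B ≤ B')) :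
    ∀ m : ℕ, ¬ ∃ A' B' : ℝ, 0 < A' ∧ A' ≤ B' ∧ ∀ x : H,
      A' * ‖x‖ ^ 2 ≤ ∑' i : {i : ℕ // i ≠ m}, ‖⟪x, f i.1⟫_ℂ‖ ^ 2 ∧
      ∑' i : {i : ℕ // i ≠ m}, ‖⟪x, f i.1⟫_ℂ‖ ^ 2 ≤ B' * ‖x‖ ^ 2 :=
  exact_frame_of_optimal_subframe_bounds_general f A B hA hAB hframe hne hsub
end

section
/- Let H be an n-dimensional complex Hilbert space with n ≥ 1, and let f_1, ..., f_k be unit vectors in H with k ≥ n. Then the frame potential satisfies Σ_{i=1}^k Σ_{j=1}^k |⟨f_i, f_j⟩|² ≥ k²/n. -/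
open scoped InnerProductSpace Matrix

lemma frob_trace {p q : Type*} [Fintype p] [Fintype q] (A : Matrix p q ℂ) :
    (Aᴴ * A).trace = ∑ i, ∑ j, (‖A i j‖ ^ 2 : ℂ) := by
  rw [Finset.sum_comm]
  simp only [Matrix.trace, Matrix.diag, Matrix.mul_apply, Matrix.conjTranspose_apply]
  refine Finset.sum_congr rfl fun j _ => Finset.sum_congr rfl fun i _ => ?_
  rw [RCLike.star_def, RCLike.conj_mul]
  norm_cast

/-- The frame potential of any `k ≥ n` unit vectors in an `n`-dimensional
complex Hilbert space (`n ≥ 1`) is at least `k² / n`. -/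
theorem frame_potential_lower_bound
    {H : Type*} [NormedAddCommGroup H] [InnerProductSpace ℂ H]
    [FiniteDimensional ℂ H] (n k : ℕ)
    (hrank : Module.finrank ℂ H = n) (hn : 1 ≤ n) (hk : n ≤ k)
    (f : Fin k → H) (hunit : ∀ i, ‖f i‖ = 1) :
    (k : ℝ) ^ 2 / n ≤ ∑ i, ∑ j, ‖⟪f i, f j⟫_ℂ‖ ^ 2 := by
  classical
  let b : OrthonormalBasis (Fin n) ℂ H :=
    (stdOrthonormalBasis ℂ H).reindex (finCongr hrank)
  set B : Matrix (Fin n) (Fin k) ℂ := Matrix.of fun m i => ⟪b m, f i⟫_ℂ with hB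
  -- Gram matrix entries
  have hG : ∀ i j, (Bᴴ * B) i j = ⟪f i, f j⟫_ℂ := by
    intro i j
    simp only [Matrix.mul_apply, Matrix.conjTranspose_apply, hB, Matrix.of_apply]
    simpa only [RCLike.star_def, inner_conj_symm] using b.sum_inner_mul_inner (f i) (f j)
  -- diagonal of B * Bᴴ
  set d : Fin n → ℝ := fun m => ∑ i, ‖B m i‖ ^ 2 with hd
  have hdnn : ∀ m, 0 ≤ d m := fun m => Finset.sum_nonneg fun i _ => sq_nonneg _
  have hdiag : ∀ m, (B * Bᴴ) m m = (d m : ℂ) := by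
    intro m
    simp only [Matrix.mul_apply, Matrix.conjTranspose_apply, hd]
    push_cast
    refine Finset.sum_congr rfl fun i _ => ?_
    rw [mul_comm, RCLike.star_def, RCLike.conj_mul]
    norm_cast
  -- sum of d m equals k
  have hcol : ∀ i, ∑ m, ‖B m i‖ ^ 2 = 1 := by
    intro i
    have h1 : (Bᴴ * B) i i = 1 := by
      rw [hG, inner_self_eq_norm_sq_to_K, hunit i]; norm_num
    have h2 : (Bᴴ * B) i i = ((∑ m, ‖B m i‖ ^ 2 : ℝ) : ℂ) := by
      simp only [Matrix.mul_apply, Matrix.conjTranspose_apply]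
      push_cast
      refine Finset.sum_congr rfl fun m _ => ?_
      rw [RCLike.star_def, RCLike.conj_mul]; norm_cast
    have := h2.symm.trans h1
    exact_mod_cast this
  have hsumd : ∑ m, d m = k := by
    have h : ∑ m, d m = ∑ i : Fin k, ∑ m : Fin n, ‖B m i‖ ^ 2 := Finset.sum_comm
    rw [h]
    simp only [hcol, Finset.sum_const, Finset.card_univ, Fintype.card_fin, nsmul_eq_mul, mul_one]
  -- frame potential equals Frobenius norm of B * Bᴴ
  have htr : ((Bᴴ * B)ᴴ * (Bᴴ * B)).trace = ((B * Bᴴ)ᴴ * (B * Bᴴ)).trace := by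
    rw [(Matrix.isHermitian_conjTranspose_mul_self B).eq,
      (Matrix.isHermitian_mul_conjTranspose_self B).eq]
    rw [← Matrix.mul_assoc, Matrix.trace_mul_cycle, ← Matrix.mul_assoc, ← Matrix.mul_assoc]
  have hFP : ∑ i, ∑ j, ‖⟪f i, f j⟫_ℂ‖ ^ 2 = ∑ m, ∑ m', ‖(B * Bᴴ) m m'‖ ^ 2 := by
    have e1 := frob_trace (Bᴴ * B)
    have e2 := frob_trace (B * Bᴴ)
    rw [e1, e2] at htr
    have : ((∑ i, ∑ j, ‖⟪f i, f j⟫_ℂ‖ ^ 2 : ℝ) : ℂ)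
        = ((∑ m, ∑ m', ‖(B * Bᴴ) m m'‖ ^ 2 : ℝ) : ℂ) := by
      push_cast
      rw [← htr]
      exact Finset.sum_congr rfl fun i _ => Finset.sum_congr rfl fun j _ => by rw [hG]
    exact_mod_cast this
  -- Cauchy–Schwarz on the diagonal
  have hcs : (k : ℝ) ^ 2 ≤ (n : ℝ) * ∑ m, d m ^ 2 := by
    have := sq_sum_le_card_mul_sum_sq (s := (Finset.univ : Finset (Fin n))) (f := d)
    simpa [hsumd] using this
  have hdle : ∑ m, d m ^ 2 ≤ ∑ m, ∑ m', ‖(B * Bᴴ) m m'‖ ^ 2 := by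
    refine Finset.sum_le_sum fun m _ => ?_
    calc d m ^ 2 = ‖(B * Bᴴ) m m‖ ^ 2 := by
          rw [hdiag m, Complex.norm_real, Real.norm_eq_abs, abs_of_nonneg (hdnn m)]
      _ ≤ ∑ m', ‖(B * Bᴴ) m m'‖ ^ 2 :=
          Finset.single_le_sum (f := fun m' => ‖(B * Bᴴ) m m'‖ ^ 2) (fun m' _ => sq_nonneg _) (Finset.mem_univ m)
  rw [hFP, div_le_iff₀ (by positivity)]
  calc (k:ℝ)^2 ≤ (n:ℝ) * ∑ m, d m ^ 2 := hcs
    _ ≤ (n:ℝ) * ∑ m, ∑ m', ‖(B * Bᴴ) m m'‖ ^ 2 :=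
        mul_le_mul_of_nonneg_left hdle (by positivity)
    _ = (∑ m, ∑ m', ‖(B * Bᴴ) m m'‖ ^ 2) * n := mul_comm _ _
end

section
/- Let H be an n-dimensional complex Hilbert space with n ≥ 1, and let f_1, ..., f_k be unit vectors in H with k ≥ n. Then Σ_{i=1}^k Σ_{j=1}^k |⟨f_i, f_j⟩|² = k²/n if and only if (f_i)_{i=1}^k is a tight frame for H, i.e. Σ_{i=1}^k |⟨x, f_i⟩|² = (k/n)·‖x‖² for all x ∈ H. -/
open scoped InnerProductSpace

/-- For `k ≥ n` unit vectors in an `n`-dimensional complex Hilbert space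
(`n ≥ 1`), the frame potential equals `k² / n` if and only if the vectors form
a tight frame with frame constant `k / n`. -/
theorem frame_potential_min_iff_tight
    {H : Type*} [NormedAddCommGroup H] [InnerProductSpace ℂ H]
    [FiniteDimensional ℂ H] (n k : ℕ)
    (hrank : Module.finrank ℂ H = n) (hn : 1 ≤ n) (hk : n ≤ k)
    (f : Fin k → H) (hunit : ∀ i, ‖f i‖ = 1) :
    ∑ i, ∑ j, ‖⟪f i, f j⟫_ℂ‖ ^ 2 = (k : ℝ) ^ 2 / n ↔
      ∀ x : H, ∑ i, ‖⟪x, f i⟫_ℂ‖ ^ 2 = ((k : ℝ) / n) * ‖x‖ ^ 2 := by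
  subst hrank
  set m := Module.finrank ℂ H with hm
  set c : ℝ := (k : ℝ) / m with hc
  have hm0 : (0 : ℝ) < (m : ℝ) := by exact_mod_cast hn
  set e := stdOrthonormalBasis ℂ H with he
  -- the frame operator
  set T : H →ₗ[ℂ] H :=
    { toFun := fun x => ∑ i, ⟪f i, x⟫_ℂ • f i
      map_add' := by
        intro x y
        simp [inner_add_right, add_smul, Finset.sum_add_distrib]
      map_smul' := by
        intro a x
        simp [inner_smul_right, mul_smul, Finset.smul_sum] } with hT
  have hTapply : ∀ x, T x = ∑ i, ⟪f i, x⟫_ℂ • f i := fun _ => rfl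
  have hfi : ∀ i : Fin k, ⟪f i, f i⟫_ℂ = 1 := by
    intro i
    rw [inner_self_eq_norm_sq_to_K, hunit i]
    norm_num
  -- quadratic form of T
  have hinner_T : ∀ x : H, ⟪x, T x⟫_ℂ = ((∑ i, ‖⟪x, f i⟫_ℂ‖ ^ 2 : ℝ) : ℂ) := by
    intro x
    rw [hTapply, inner_sum]
    push_cast
    refine Finset.sum_congr rfl fun i _ => ?_
    rw [inner_smul_right, ← inner_conj_symm (f i) x, RCLike.conj_mul]
    norm_cast
  -- trace of T
  have htr : ∑ a, ⟪T (e a), e a⟫_ℂ = (k : ℂ) := by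
    have h0 : ∀ a, ⟪T (e a), e a⟫_ℂ = ∑ i, ⟪f i, e a⟫_ℂ * ⟪e a, f i⟫_ℂ := by
      intro a
      rw [hTapply, sum_inner]
      refine Finset.sum_congr rfl fun i _ => ?_
      rw [inner_smul_left, inner_conj_symm]
      ring
    simp_rw [h0]
    rw [Finset.sum_comm]
    simp_rw [e.sum_inner_mul_inner, hfi]
    simp
  have htr' : ∑ a, ⟪e a, T (e a)⟫_ℂ = (k : ℂ) := by
    have := congrArg (starRingEnd ℂ) htr
    simpa [map_sum, inner_conj_symm] using this
  -- trace of T²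
  have htr2 : ∑ a, ⟪T (e a), T (e a)⟫_ℂ
      = ((∑ i, ∑ j, ‖⟪f i, f j⟫_ℂ‖ ^ 2 : ℝ) : ℂ) := by
    have h1 : ∀ a, ⟪T (e a), T (e a)⟫_ℂ
        = ∑ i, ∑ j, (⟪e a, f i⟫_ℂ * ⟪f j, e a⟫_ℂ) * ⟪f i, f j⟫_ℂ := by
      intro a
      rw [hTapply, sum_inner]
      refine Finset.sum_congr rfl fun i _ => ?_
      rw [inner_smul_left, inner_sum, Finset.mul_sum, inner_conj_symm]
      refine Finset.sum_congr rfl fun j _ => ?_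
      rw [inner_smul_right]
      ring
    simp_rw [h1]
    rw [Finset.sum_comm]
    have h2 : ∀ i : Fin k, ∑ a, ∑ j, (⟪e a, f i⟫_ℂ * ⟪f j, e a⟫_ℂ) * ⟪f i, f j⟫_ℂ
        = ∑ j, ⟪f j, f i⟫_ℂ * ⟪f i, f j⟫_ℂ := by
      intro i
      rw [Finset.sum_comm]
      refine Finset.sum_congr rfl fun j _ => ?_
      rw [← Finset.sum_mul]
      congr 1
      rw [← e.sum_inner_mul_inner (f j) (f i)]
      exact Finset.sum_congr rfl fun a _ => by ring
    simp_rw [h2]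
    push_cast
    refine Finset.sum_congr rfl fun i _ => Finset.sum_congr rfl fun j _ => ?_
    rw [← inner_conj_symm (f j) (f i), RCLike.conj_mul]
    norm_cast
  have hen : ∑ a, ⟪e a, e a⟫_ℂ = (m : ℂ) := by
    have h0 : ∀ a, ⟪e a, e a⟫_ℂ = 1 := fun a => by
      rw [inner_self_eq_norm_sq_to_K, e.orthonormal.1 a]; norm_num
    simp [h0, hm]
  -- key identity: FP - k²/m = ∑ ‖T e a - c e a‖²
  have hmc : (m : ℂ) ≠ 0 := by
    exact_mod_cast ne_of_gt (show (0:ℝ) < (m:ℝ) from hm0)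
  have hcc : (c : ℂ) = (k : ℂ) / m := by
    rw [hc]; push_cast; ring
  have key : ((∑ i, ∑ j, ‖⟪f i, f j⟫_ℂ‖ ^ 2 : ℝ) : ℂ) - (k : ℂ) ^ 2 / m
      = ((∑ a, ‖T (e a) - (c : ℂ) • e a‖ ^ 2 : ℝ) : ℂ) := by
    have expand : ∀ a, ⟪T (e a) - (c : ℂ) • e a, T (e a) - (c : ℂ) • e a⟫_ℂ
        = ⟪T (e a), T (e a)⟫_ℂ - (c : ℂ) * ⟪T (e a), e a⟫_ℂ
          - (c : ℂ) * ⟪e a, T (e a)⟫_ℂ + (c : ℂ)^2 * ⟪e a, e a⟫_ℂ := by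
      intro a
      rw [inner_sub_sub_self, inner_smul_left, inner_smul_right,
        inner_smul_left, inner_smul_right]
      simp only [Complex.conj_ofReal]
      ring
    have hnrm : ∀ a, ((‖T (e a) - (c : ℂ) • e a‖ ^ 2 : ℝ) : ℂ)
        = ⟪T (e a) - (c : ℂ) • e a, T (e a) - (c : ℂ) • e a⟫_ℂ := by
      intro a
      rw [inner_self_eq_norm_sq_to_K]
      norm_cast
    calc ((∑ i, ∑ j, ‖⟪f i, f j⟫_ℂ‖ ^ 2 : ℝ) : ℂ) - (k : ℂ) ^ 2 / m
        = ∑ a, (⟪T (e a), T (e a)⟫_ℂ - (c : ℂ) * ⟪T (e a), e a⟫_ℂ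
          - (c : ℂ) * ⟪e a, T (e a)⟫_ℂ + (c : ℂ)^2 * ⟪e a, e a⟫_ℂ) := by
          rw [Finset.sum_add_distrib, Finset.sum_sub_distrib, Finset.sum_sub_distrib,
            ← Finset.mul_sum, ← Finset.mul_sum, ← Finset.mul_sum,
            htr, htr', htr2, hen, hcc]
          field_simp
          ring
      _ = ∑ a, ((‖T (e a) - (c : ℂ) • e a‖ ^ 2 : ℝ) : ℂ) :=
          Finset.sum_congr rfl fun a _ => ((hnrm a).trans (expand a)).symm
      _ = ((∑ a, ‖T (e a) - (c : ℂ) • e a‖ ^ 2 : ℝ) : ℂ) := by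
          push_cast
          rfl
  -- transfer to reals
  have keyR : (∑ i, ∑ j, ‖⟪f i, f j⟫_ℂ‖ ^ 2 : ℝ) - (k : ℝ) ^ 2 / m
      = ∑ a, ‖T (e a) - (c : ℂ) • e a‖ ^ 2 := by
    have h := key
    have h2 : ((k : ℂ) ^ 2 / m) = (((k:ℝ)^2 / m : ℝ) : ℂ) := by push_cast; ring
    rw [h2, ← Complex.ofReal_sub] at h
    exact_mod_cast h
  constructor
  · -- FP = k²/m → tight
    intro hFP
    have hsum0 : ∑ a, ‖T (e a) - (c : ℂ) • e a‖ ^ 2 = 0 := by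
      rw [← keyR, hFP]; ring
    have hzero : ∀ a, T (e a) = (c : ℂ) • e a := by
      intro a
      have h := (Finset.sum_eq_zero_iff_of_nonneg
        (fun b _ => sq_nonneg _)).mp hsum0 a (Finset.mem_univ a)
      have h2 : ‖T (e a) - (c : ℂ) • e a‖ = 0 := by
        have := sq_eq_zero_iff.mp h
        exact this
      exact sub_eq_zero.mp (norm_eq_zero.mp h2)
    have hTx : ∀ x, T x = (c : ℂ) • x := by
      intro x
      have hrepr : T x = ∑ a, ⟪e a, x⟫_ℂ • T (e a) := by
        conv_lhs => rw [← e.sum_repr' x]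
        rw [map_sum]
        exact Finset.sum_congr rfl fun a _ => by rw [map_smul]
      rw [hrepr]
      conv_rhs => rw [← e.sum_repr' x]
      rw [Finset.smul_sum]
      exact Finset.sum_congr rfl fun a _ => by rw [hzero a, smul_comm]
    intro x
    have h := hinner_T x
    rw [hTx x, inner_smul_right, inner_self_eq_norm_sq_to_K] at h
    have h3 : (((c * ‖x‖ ^ 2 : ℝ)) : ℂ) = ((∑ i, ‖⟪x, f i⟫_ℂ‖ ^ 2 : ℝ) : ℂ) := by
      rw [← h]; push_cast; rfl
    exact_mod_cast h3.symm
  · -- tight → FP = k²/m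
    intro htight
    have hAx : ∀ x : H, ⟪x, T x - (c : ℂ) • x⟫_ℂ = 0 := by
      intro x
      rw [inner_sub_right, hinner_T x, htight x, inner_smul_right,
        inner_self_eq_norm_sq_to_K]
      push_cast
      exact sub_self _
    have hA0 : (T - (c : ℂ) • LinearMap.id : H →ₗ[ℂ] H) = 0 := by
      rw [← inner_map_self_eq_zero]
      intro x
      have h2 : ((T - (c : ℂ) • LinearMap.id : H →ₗ[ℂ] H) x) = T x - (c : ℂ) • x := by
        simp
      rw [h2, ← inner_conj_symm, hAx x, map_zero]
    have hzero : ∀ a, T (e a) - (c : ℂ) • e a = 0 := by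
      intro a
      have h := LinearMap.congr_fun hA0 (e a)
      simpa using h
    have hsum0 : ∑ a, ‖T (e a) - (c : ℂ) • e a‖ ^ 2 = 0 := by
      refine Finset.sum_eq_zero fun a _ => ?_
      rw [hzero a]
      simp
    rw [hsum0] at keyR
    linarith
end
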